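/- Let G be a connected Lie group with Lie algebra 𝔤 spanned by X₁,X₂,X₃,X₄, with left-invariant almost complex structure J (JX₁=X₃, JX₂=X₄, JX₃=−X₁, JX₄=−X₂) and left-invariant Norden metric g with g(X₁,X₁)=g(X₂,X₂)=−g(X₃,X₃)=−g(X₄,X₄)=1, g(Xᵢ,Xⱼ)=0 for i≠j, satisfying g([X,Y],Z)+g([X,Z],Y)=0. Then (G,J,g) is quasi-Kähler with Norden metric if and only if the brackets are given, for some λ₁,λ₂,λ₃,λ₄ ∈ ℝ, by [X₁,X₃]=λ₂X₂+λ₄X₄, [X₂,X₄]=λ₁X₁+λ₃X₃, [X₂,X₃]=−λ₂X₁−λ₃X₄, [X₃,X₄]=−λ₄X₁+λ₃X₂, [X₄,X₁]=λ₁X₂+λ₄X₃, [X₂,X₁]=−λ₂X₃+λ₁X₄. -/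

import Mathlib

/-! Skew-symmetry of the bracket together with the invariance of `g` makes
`T(x, y, z) = g([x, y], z)` totally skew-symmetric. In dimension four such a form has four
independent components, and these are the `λᵢ`. Moreover
`F(x, y, z) = ½ (T(x, Jy, z) + T(x, Jz, y))`, whose cyclic sum cancels in pairs because `T` changes
sign under exchanging its outer arguments; so under the invariance condition both sides of the
equivalence hold. -/

section Invariant

variable {R V : Type*} [CommRing R] [AddCommGroup V] [Module R V]
  (B : LinearMap.BilinForm R V) {b : V → V → V}

theorem bilinForm_bracket_swap_left (hskew : ∀ x y, b x y = -b y x) (x y z : V) :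
    B (b x y) z = -B (b y x) z := by
  rw [hskew, map_neg, LinearMap.neg_apply]

theorem bilinForm_bracket_swap_right (hinv : ∀ x y z, B (b x y) z + B (b x z) y = 0)
    (x y z : V) : B (b x y) z = -B (b x z) y :=
  eq_neg_of_add_eq_zero_left (hinv x y z)

theorem bilinForm_bracket_swap_outer (hskew : ∀ x y, b x y = -b y x)
    (hinv : ∀ x y z, B (b x y) z + B (b x z) y = 0) (x y z : V) :
    B (b x y) z = -B (b z y) x := by
  rw [bilinForm_bracket_swap_right B hinv, bilinForm_bracket_swap_left B hskew,
    bilinForm_bracket_swap_right B hinv, bilinForm_bracket_swap_left B hskew, neg_neg]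

def structuralTensor (J : V → V) (nab : V → V → V) (x y z : V) : R :=
  B (nab x (J y) - J (nab x y)) z

theorem structuralTensor_eq (hinv : ∀ x y z, B (b x y) z + B (b x z) y = 0) {J : V → V}
    (hJ : ∀ u v, B (J u) v = B u (J v)) {nab : V → V → V} {c : R}
    (hnab : ∀ x y, nab x y = c • b x y) (x y z : V) :
    structuralTensor B J nab x y z = c * (B (b x (J y)) z + B (b x (J z)) y) := by
  rw [structuralTensor, hnab, hnab, map_sub, LinearMap.sub_apply, hJ, map_smul, map_smul,
    LinearMap.smul_apply, LinearMap.smul_apply, smul_eq_mul, smul_eq_mul,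
    bilinForm_bracket_swap_right B hinv x y (J z)]
  ring

theorem structuralTensor_cyclic_sum (hskew : ∀ x y, b x y = -b y x)
    (hinv : ∀ x y z, B (b x y) z + B (b x z) y = 0) {J : V → V}
    (hJ : ∀ u v, B (J u) v = B u (J v)) {nab : V → V → V} {c : R}
    (hnab : ∀ x y, nab x y = c • b x y) (x y z : V) :
    structuralTensor B J nab x y z + structuralTensor B J nab y z x +
      structuralTensor B J nab z x y = 0 := by
  simp only [structuralTensor_eq B hinv hJ hnab]
  linear_combination c * (bilinForm_bracket_swap_outer B hskew hinv x (J y) z +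
    bilinForm_bracket_swap_outer B hskew hinv x (J z) y +
    bilinForm_bracket_swap_outer B hskew hinv y (J x) z)

end Invariant

def nordenForm : LinearMap.BilinForm ℝ (Fin 4 → ℝ) :=
  Matrix.toBilin' (Matrix.diagonal ![1, 1, -1, -1])

theorem nordenForm_apply (x y : Fin 4 → ℝ) :
    nordenForm x y = x 0 * y 0 + x 1 * y 1 - x 2 * y 2 - x 3 * y 3 := by
  simp only [nordenForm, Matrix.toBilin'_apply', dotProduct, Matrix.mulVec_diagonal, Fin.sum_univ_four,
    Matrix.cons_val]
  ring

def nordenJ (x : Fin 4 → ℝ) : Fin 4 → ℝ := ![-(x 2), -(x 3), x 0, x 1]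

theorem nordenForm_nordenJ_left (u v : Fin 4 → ℝ) :
    nordenForm (nordenJ u) v = nordenForm u (nordenJ v) := by
  simp only [nordenForm_apply, nordenJ, Matrix.cons_val]
  ring

theorem nordenForm_single_right (x : Fin 4 → ℝ) (k : Fin 4) :
    nordenForm x (Pi.single k 1) = ![1, 1, -1, -1] k * x k := by
  fin_cases k <;> simp [nordenForm_apply]

theorem exists_norden_family {b : (Fin 4 → ℝ) → (Fin 4 → ℝ) → Fin 4 → ℝ}
    (hskew : ∀ x y, b x y = -b y x)
    (hinv : ∀ x y z, nordenForm (b x y) z + nordenForm (b x z) y = 0)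
    {e : Fin 4 → Fin 4 → ℝ} (he : ∀ i, e i = Pi.single i 1) :
    ∃ l1 l2 l3 l4 : ℝ,
      b (e 0) (e 2) = l2 • e 1 + l4 • e 3 ∧
      b (e 1) (e 3) = l1 • e 0 + l3 • e 2 ∧
      b (e 1) (e 2) = -(l2 • e 0) - l3 • e 3 ∧
      b (e 2) (e 3) = -(l4 • e 0) + l3 • e 1 ∧
      b (e 3) (e 0) = l1 • e 1 + l4 • e 2 ∧
      b (e 1) (e 0) = -(l2 • e 2) + l1 • e 3 := by
  obtain ⟨T, h12, h23, hcoord⟩ : ∃ T : Fin 4 → Fin 4 → Fin 4 → ℝ,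
      (∀ i j k, T i j k = -T j i k) ∧ (∀ i j k, T i j k = -T i k j) ∧
      ∀ i j k, b (e i) (e j) k = ![1, 1, -1, -1] k * T i j k := by
    refine ⟨fun i j k => nordenForm (b (e i) (e j)) (e k),
      fun _ _ _ => bilinForm_bracket_swap_left _ hskew _ _ _,
      fun _ _ _ => bilinForm_bracket_swap_right _ hinv _ _ _, fun i j k => ?_⟩
    dsimp only
    rw [he k, nordenForm_single_right, ← mul_assoc]
    fin_cases k <;> norm_num
  refine ⟨T 1 3 0, T 0 2 1, -T 1 3 2, -T 0 2 3, ?_, ?_, ?_, ?_, ?_, ?_⟩ <;> ext k <;>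
    rw [hcoord] <;> fin_cases k <;>
    simp only [he, Pi.add_apply, Pi.sub_apply, Pi.neg_apply, Pi.smul_apply, smul_eq_mul,
      Pi.single_apply, Fin.zero_eta, Fin.mk_one, Fin.reduceFinMk, Fin.isValue, Matrix.cons_val_zero,
      Matrix.cons_val_one, Matrix.cons_val] <;> grind

theorem stmt_10
    (b : (Fin 4 → ℝ) → (Fin 4 → ℝ) → (Fin 4 → ℝ))
    -- `b` is a Lie bracket: bilinear, skew-symmetric, Jacobi
    (hb_skew : ∀ x y, b x y = - b y x)
    (e : Fin 4 → (Fin 4 → ℝ)) (he : ∀ i, e i = Pi.single i 1)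
    (J : (Fin 4 → ℝ) → (Fin 4 → ℝ)) (hJ : ∀ x, J x = ![-(x 2), -(x 3), x 0, x 1])
    (g : (Fin 4 → ℝ) → (Fin 4 → ℝ) → ℝ)
    (hg : ∀ x y, g x y = x 0 * y 0 + x 1 * y 1 - x 2 * y 2 - x 3 * y 3)
    -- the invariance condition `g([X,Y],Z) + g([X,Z],Y) = 0`
    (hinv : ∀ x y z, g (b x y) z + g (b x z) y = 0)
    -- the Levi-Civita connection of `g` and the structural tensor `F`
    (nab : (Fin 4 → ℝ) → (Fin 4 → ℝ) → (Fin 4 → ℝ))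
    (hnab : ∀ x y, nab x y = ((1 : ℝ)/2) • b x y)
    (F : (Fin 4 → ℝ) → (Fin 4 → ℝ) → (Fin 4 → ℝ) → ℝ)
    (hF : ∀ x y z, F x y z = g (nab x (J y) - J (nab x y)) z) :
    (∀ x y z, F x y z + F y z x + F z x y = 0) ↔
      ∃ l1 l2 l3 l4 : ℝ,
        b (e 0) (e 2) = l2 • e 1 + l4 • e 3 ∧
        b (e 1) (e 3) = l1 • e 0 + l3 • e 2 ∧
        b (e 1) (e 2) = -(l2 • e 0) - l3 • e 3 ∧
        b (e 2) (e 3) = -(l4 • e 0) + l3 • e 1 ∧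
        b (e 3) (e 0) = l1 • e 1 + l4 • e 2 ∧
        b (e 1) (e 0) = -(l2 • e 2) + l1 • e 3 := by
  have hg' (x y : Fin 4 → ℝ) : g x y = nordenForm x y := (hg x y).trans (nordenForm_apply x y).symm
  have hinv' : ∀ x y z, nordenForm (b x y) z + nordenForm (b x z) y = 0 := by
    simpa only [hg'] using hinv
  have hJ' : ∀ u v, nordenForm (J u) v = nordenForm u (J v) := by
    obtain rfl : J = nordenJ := funext hJ
    exact nordenForm_nordenJ_left
  have hF' : F = structuralTensor nordenForm J nab := by
    ext x y z
    rw [hF, hg', structuralTensor]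
  constructor
  · exact fun _ => exists_norden_family hb_skew hinv' he
  · rintro - x y z
    rw [hF']
    exact structuralTensor_cyclic_sum nordenForm hb_skew hinv' hJ' hnab x y z
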